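/- For all r, r′ ∈ 𝓡, the power series A^r(x) and A^{r′}(x) have the same radius of convergence. -/

import Mathlib

/-!
Every coefficient of the recursion is nonnegative, so all `γ^r_n` are positive, and for `r' ≠ r`
the single cross term `i = 1, j = r'` gives `γ^r_{n+1} ≥ |s_{r'}| γ^r_1 γ^{r'}_n`. Dividing by
`n!` yields `(n + 1) a^r_{n+1} ≥ |s_{r'}| a^r_1 a^{r'}_n`: the series `A^{r'}` is dominated by a
constant multiple of the derivative of `A^r`, so it converges wherever `A^r` does. By symmetry the
radii coincide.
-/

open scoped BigOperators ENNReal NNReal Nat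
open Filter Topology Asymptotics Finset

/-- The radius of convergence of the power series with real coefficients `c`. -/
noncomputable def seriesRadius (c : ℕ → ℝ) : ℝ≥0∞ :=
  ⨆ (r : ℝ≥0) (_ : Summable fun n => |c n| * (r : ℝ) ^ n), (r : ℝ≥0∞)

section seriesRadius

variable {c d : ℕ → ℝ}

theorem le_seriesRadius_of_summable {r : ℝ≥0} (h : Summable fun n => |c n| * (r : ℝ) ^ n) :
    (r : ℝ≥0∞) ≤ seriesRadius c :=
  le_iSup₂ (f := fun (r : ℝ≥0) (_ : Summable fun n => |c n| * (r : ℝ) ^ n) => (r : ℝ≥0∞)) r h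

theorem summable_of_lt_seriesRadius {r : ℝ≥0} (h : (r : ℝ≥0∞) < seriesRadius c) :
    Summable fun n => |c n| * (r : ℝ) ^ n := by
  obtain ⟨x, hx⟩ := lt_iSup_iff.1 h
  obtain ⟨hsum, hrx⟩ := lt_iSup_iff.1 hx
  have hrx : (r : ℝ) ≤ x := by exact_mod_cast hrx.le
  refine hsum.of_nonneg_of_le (fun n => by positivity) fun n => ?_
  gcongr

theorem tendsto_succ_mul_pow_atTop_zero {q : ℝ} (hq₀ : 0 ≤ q) (hq₁ : q < 1) :
    Tendsto (fun m : ℕ => ((m : ℝ) + 1) * q ^ m) atTop (𝓝 0) := by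
  have hq : ‖q‖ < 1 := by rwa [Real.norm_of_nonneg hq₀]
  refine ((summable_pow_mul_geometric_of_norm_lt_one 1 hq).add
    (summable_geometric_of_lt_one hq₀ hq₁)).tendsto_atTop_zero.congr fun m => ?_
  ring

theorem seriesRadius_le_of_abs_le_mul_succ {C : ℝ}
    (h : ∀ n, |d n| ≤ C * (n + 1) * |c (n + 1)|) : seriesRadius c ≤ seriesRadius d := by
  refine ENNReal.le_of_forall_nnreal_lt fun y hy => ?_
  obtain ⟨x, hyx, hx⟩ := ENNReal.lt_iff_exists_nnreal_btwn.1 hy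
  have hyx : (y : ℝ) < x := by exact_mod_cast hyx
  have hx₀ : (0 : ℝ) < x := y.coe_nonneg.trans_lt hyx
  set q := (y : ℝ) / x
  have hq := tendsto_succ_mul_pow_atTop_zero (q := q) (by positivity) ((div_lt_one hx₀).2 hyx)
  have hc : Summable fun m => |c (m + 1)| * (x : ℝ) ^ (m + 1) :=
    (summable_nat_add_iff 1).2 (summable_of_lt_seriesRadius hx)
  refine le_seriesRadius_of_summable (summable_of_isBigO_nat hc ?_)
  calc (fun m => |d m| * (y : ℝ) ^ m)
      =O[atTop] fun m => C / x * (((m : ℝ) + 1) * q ^ m) * (|c (m + 1)| * (x : ℝ) ^ (m + 1)) := by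
        refine isBigO_of_le _ fun m => ?_
        rw [Real.norm_of_nonneg (by positivity)]
        refine le_trans ?_ (le_abs_self _)
        calc |d m| * (y : ℝ) ^ m ≤ C * (m + 1) * |c (m + 1)| * (y : ℝ) ^ m := by gcongr; exact h m
          _ = _ := by simp only [q]; rw [div_pow, pow_succ]; field_simp
    _ =O[atTop] fun m => |c (m + 1)| * (x : ℝ) ^ (m + 1) := by
        simpa only [one_mul] using ((hq.isBigO_one ℝ).const_mul_left (C / x)).mul (isBigO_refl _ _)

end seriesRadius

noncomputable def expCoeff (f : ℕ → ℝ) (n : ℕ) : ℝ := if n = 0 then 0 else f n / n !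

section CoupledSystem

variable {ι : Type*} [Fintype ι] [DecidableEq ι] {s : ι → ℤ} {p γ : ι → ℕ → ℝ}

def selfSum (s : ℤ) (g : ℕ → ℝ) (n : ℕ) : ℝ :=
  ∑ i ∈ Ico 1 n, ((|s| : ℝ) * i - (s.sign : ℝ)) * g i * g (n - i)

def crossSum (s : ℤ) (g h : ℕ → ℝ) (n : ℕ) : ℝ :=
  ∑ i ∈ Ico 1 n, (|s| : ℝ) * i * h (n - i) * g i

def CoupledRecursion (s : ι → ℤ) (p γ : ι → ℕ → ℝ) : Prop :=
  ∀ r n, 1 ≤ n → γ r n = p r n + selfSum (s r) (γ r) n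
    + ∑ j ∈ univ.erase r, crossSum (s j) (γ r) (γ j) n

theorem Int.sign_le_abs (s : ℤ) : s.sign ≤ |s| := by
  rcases lt_trichotomy s 0 with h | rfl | h
  · rw [Int.sign_eq_neg_one_of_neg h]; linarith [abs_nonneg s]
  · simp
  · rw [Int.sign_eq_one_of_pos h, abs_of_pos h]; omega

theorem selfSum_nonneg (s : ℤ) {g : ℕ → ℝ} {n : ℕ} (hg : ∀ i ∈ Ico 1 n, 0 ≤ g i) :
    0 ≤ selfSum s g n := by
  refine sum_nonneg fun i hi => ?_
  obtain ⟨hi₁, hin⟩ := mem_Ico.1 hi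
  have hsign : (s.sign : ℝ) ≤ |(s : ℝ)| := by exact_mod_cast Int.sign_le_abs s
  have hcoeff : 0 ≤ (|s| : ℝ) * i - (s.sign : ℝ) := by
    have : |(s : ℝ)| ≤ |(s : ℝ)| * i := le_mul_of_one_le_right (abs_nonneg _) (by exact_mod_cast hi₁)
    linarith
  have := hg i hi
  have := hg (n - i) (mem_Ico.2 ⟨by omega, by omega⟩)
  positivity

theorem crossSum_nonneg (s : ℤ) {g h : ℕ → ℝ} {n : ℕ} (hg : ∀ i ∈ Ico 1 n, 0 ≤ g i)
    (hh : ∀ i ∈ Ico 1 n, 0 ≤ h i) : 0 ≤ crossSum s g h n := by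
  refine sum_nonneg fun i hi => ?_
  obtain ⟨hi₁, hin⟩ := mem_Ico.1 hi
  have := hg i hi
  have := hh (n - i) (mem_Ico.2 ⟨by omega, by omega⟩)
  positivity

theorem mul_le_crossSum_succ (s : ℤ) {g h : ℕ → ℝ} {n : ℕ} (hn : 1 ≤ n)
    (hg : ∀ i ∈ Ico 1 (n + 1), 0 ≤ g i) (hh : ∀ i ∈ Ico 1 (n + 1), 0 ≤ h i) :
    |(s : ℝ)| * g 1 * h n ≤ crossSum s g h (n + 1) := by
  have hterm := single_le_sum (f := fun i => (|s| : ℝ) * i * h (n + 1 - i) * g i)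
    (fun i hi => by
      obtain ⟨hi₁, hin⟩ := mem_Ico.1 hi
      have := hg i hi
      have := hh (n + 1 - i) (mem_Ico.2 ⟨by omega, by omega⟩)
      positivity)
    (mem_Ico.2 ⟨le_rfl, by omega⟩ : 1 ∈ Ico 1 (n + 1))
  simp only [Nat.cast_one, mul_one, Nat.add_sub_cancel] at hterm
  unfold crossSum
  linarith

namespace CoupledRecursion

theorem pos (hp : ∀ r k, 1 ≤ k → 0 < p r k) (hγ : CoupledRecursion s p γ) :
    ∀ n, 1 ≤ n → ∀ r, 0 < γ r n := by
  intro n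
  induction n using Nat.strong_induction_on with
  | _ n ih =>
    intro hn r
    have hprev : ∀ j, ∀ i ∈ Ico 1 n, 0 ≤ γ j i := fun j i hi =>
      (ih i (mem_Ico.1 hi).2 (mem_Ico.1 hi).1 j).le
    rw [hγ r n hn]
    have := hp r n hn
    have := selfSum_nonneg (s r) (hprev r)
    have := sum_nonneg fun j (_ : j ∈ univ.erase r) => crossSum_nonneg (s j) (hprev r) (hprev j)
    linarith

theorem mul_le_succ (hp : ∀ r k, 1 ≤ k → 0 < p r k) (hγ : CoupledRecursion s p γ) {r r' : ι}
    (hne : r' ≠ r) {n : ℕ} (hn : 1 ≤ n) : |(s r' : ℝ)| * γ r 1 * γ r' n ≤ γ r (n + 1) := by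
  have hnonneg : ∀ j, ∀ i ∈ Ico 1 (n + 1), 0 ≤ γ j i := fun j i hi =>
    (hγ.pos hp i (mem_Ico.1 hi).1 j).le
  have hcross : crossSum (s r') (γ r) (γ r') (n + 1)
      ≤ ∑ j ∈ univ.erase r, crossSum (s j) (γ r) (γ j) (n + 1) :=
    single_le_sum (f := fun j => crossSum (s j) (γ r) (γ j) (n + 1))
      (fun j _ => crossSum_nonneg (s j) (hnonneg r) (hnonneg j)) (mem_erase.2 ⟨hne, mem_univ r'⟩)
  rw [hγ r (n + 1) (by omega)]
  have := hp r (n + 1) (by omega)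
  have := selfSum_nonneg (s r) (hnonneg r)
  have := mul_le_crossSum_succ (s r') hn (hnonneg r) (hnonneg r')
  linarith

theorem abs_expCoeff_le (hp : ∀ r k, 1 ≤ k → 0 < p r k) (hγ : CoupledRecursion s p γ)
    {r r' : ι} (hne : r' ≠ r) (hs : s r' ≠ 0) (n : ℕ) :
    |expCoeff (γ r') n| ≤ (|(s r' : ℝ)| * γ r 1)⁻¹ * (n + 1) * |expCoeff (γ r) (n + 1)| := by
  have hK : 0 < |(s r' : ℝ)| * γ r 1 := mul_pos (by positivity) (hγ.pos hp 1 le_rfl r)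
  rcases Nat.eq_zero_or_pos n with rfl | hn
  · simp only [expCoeff, if_pos, abs_zero]
    positivity
  have hγr := hγ.pos hp (n + 1) (by omega) r
  have hγr' := hγ.pos hp n hn r'
  simp only [expCoeff, if_neg (by omega : n ≠ 0), if_neg (by omega : n + 1 ≠ 0)]
  rw [abs_of_nonneg (a := γ r' n / n !) (by positivity),
    abs_of_nonneg (a := γ r (n + 1) / (n + 1)!) (by positivity), mul_assoc,
    le_inv_mul_iff₀ hK, Nat.factorial_succ, Nat.cast_mul, Nat.cast_succ,
    ← mul_div_assoc ((n : ℝ) + 1), mul_div_mul_left _ _ (by positivity), ← mul_div_assoc]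
  gcongr
  exact hγ.mul_le_succ hp hne hn

end CoupledRecursion

end CoupledSystem

theorem systems_same_radius_general
    (ι : Type) [Fintype ι] [DecidableEq ι]
    (s : ι → ℤ) (hs : ∀ r, s r ≠ 0)
    (p : ι → ℕ → ℝ) (hp : ∀ r k, 1 ≤ k → 0 < p r k)
    (γ : ι → ℕ → ℝ)
    (hγ : ∀ r n, 1 ≤ n → γ r n = p r n
      + (∑ i ∈ Finset.Ico 1 n,
          ((|s r| : ℝ) * i - ((s r).sign : ℝ)) * γ r i * γ r (n - i))
      + ∑ j ∈ Finset.univ.erase r, ∑ i ∈ Finset.Ico 1 n,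
          (|s j| : ℝ) * i * γ j (n - i) * γ r i)
    (a : ι → ℕ → ℝ) (ha : ∀ r n, a r n = if n = 0 then 0 else γ r n / (Nat.factorial n)) :
    ∀ r r' : ι, seriesRadius (a r) = seriesRadius (a r') := by
  obtain rfl : a = fun r => expCoeff (γ r) := funext fun r => funext (ha r)
  have hrec : CoupledRecursion s p γ := hγ
  have hle : ∀ {r r'}, r' ≠ r → seriesRadius (expCoeff (γ r)) ≤ seriesRadius (expCoeff (γ r')) :=
    fun hne => seriesRadius_le_of_abs_le_mul_succ (hrec.abs_expCoeff_le hp hne (hs _))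
  intro r r'
  rcases eq_or_ne r r' with rfl | hne
  · rfl
  · exact le_antisymm (hle hne.symm) (hle hne)

/-- For all `r, r′ ∈ 𝓡` the power series `A^r` and `A^{r′}` have the same radius of
convergence. -/
theorem systems_same_radius
    (ι : Type) [Fintype ι] [DecidableEq ι] [Nonempty ι]
    (s : ι → ℤ) (hs : ∀ r, s r ≠ 0)
    (p : ι → ℕ → ℝ) (hp : ∀ r k, 1 ≤ k → 0 < p r k)
    (ρ : ι → ℝ≥0∞)
    (hρ : ∀ r, ρ r = seriesRadius fun k => if k = 0 then 0 else p r k / (Nat.factorial k))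
    (hρ0 : ∀ r, 0 < ρ r)
    (γ : ι → ℕ → ℝ)
    (hγ : ∀ r n, 1 ≤ n → γ r n = p r n
      + (∑ i ∈ Finset.Ico 1 n,
          ((|s r| : ℝ) * i - ((s r).sign : ℝ)) * γ r i * γ r (n - i))
      + ∑ j ∈ Finset.univ.erase r, ∑ i ∈ Finset.Ico 1 n,
          (|s j| : ℝ) * i * γ j (n - i) * γ r i)
    (a : ι → ℕ → ℝ) (ha : ∀ r n, a r n = if n = 0 then 0 else γ r n / (Nat.factorial n)) :
    ∀ r r' : ι, seriesRadius (a r) = seriesRadius (a r') :=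
  systems_same_radius_general ι s hs p hp γ hγ a ha
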